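/- arXiv:2005.05499 — 2 statements merged into one kernel-verified Lean document; each statement's English description precedes it below -/
import Mathlib

section
/- Let 0 ≤ r₁ < 1, 0 ≤ r₂ < 1, θ₁, θ₂, α₂ ∈ ℝ. Then ∑_{n=1}^∞ n^2 r₁^n r₂^{n-1} sin(n θ₁ - (n-1) θ₂ - α₂) = r₁ · Im( e^{i(θ₁-α₂)} (1 + r₁ r₂ e^{i(θ₁-θ₂)}) / (1 - r₁ r₂ e^{i(θ₁-θ₂)})^3 ). -/
open Complex

lemma choose_aux (n : ℕ) : (n + 2).choose 2 + (n + 1).choose 2 = (n + 1) ^ 2 := by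
  induction n with
  | zero => rfl
  | succ n ih =>
    rw [show n + 2 = (n + 1) + 1 from rfl, Nat.choose_succ_succ (n + 1) 1,
      Nat.choose_one_right] at ih
    rw [show n + 1 + 2 = (n + 2) + 1 from rfl, show n + 1 + 1 = (n + 1) + 1 from rfl,
      Nat.choose_succ_succ (n + 2) 1, Nat.choose_succ_succ (n + 1) 1,
      Nat.choose_one_right, Nat.choose_one_right]
    simp only [show Nat.succ 1 = 2 from rfl] at ih ⊢
    have e : (n + 1 + 1) ^ 2 = (n + 1) ^ 2 + 2 * (n + 1) + 1 := by ring
    omega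

lemma hasSum_sq_geom {z : ℂ} (hz : ‖z‖ < 1) :
    HasSum (fun n : ℕ => ((n + 1 : ℕ) : ℂ) ^ 2 * z ^ n) ((1 + z) / (1 - z) ^ 3) := by
  have A : HasSum (fun n : ℕ => (((n + 2).choose 2 : ℕ) : ℂ) * z ^ n) (1 / (1 - z) ^ 3) :=
    hasSum_choose_mul_geometric_of_norm_lt_one 2 hz
  have B : HasSum (fun n : ℕ => (((n + 1).choose 2 : ℕ) : ℂ) * z ^ n) (z * (1 / (1 - z) ^ 3)) := by
    have := A.mul_left z
    have h' : HasSum (fun n : ℕ => (((n + 1 + 1).choose 2 : ℕ) : ℂ) * z ^ (n + 1))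
        (z * (1 / (1 - z) ^ 3)) := by
      convert this using 2 with n
      · rfl
      · ring
    rw [hasSum_nat_add_iff (f := fun n : ℕ => (((n + 1).choose 2 : ℕ) : ℂ) * z ^ n) 1] at h'
    simpa using h'
  have C := A.add B
  have : (1 / (1 - z) ^ 3 + z * (1 / (1 - z) ^ 3)) = (1 + z) / (1 - z) ^ 3 := by ring
  rw [this] at C
  convert C using 2 with n
  rw [← add_mul]
  congr 1
  rw [← Nat.cast_add, choose_aux]
  push_cast
  ring

theorem stmt9 (r₁ r₂ θ₁ θ₂ α₂ : ℝ)
    (h₁ : 0 ≤ r₁) (h₁' : r₁ < 1) (h₂ : 0 ≤ r₂) (h₂' : r₂ < 1) :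
    ∑' n : ℕ, ((n + 1 : ℕ) : ℝ) ^ 2 * r₁ ^ (n + 1) * r₂ ^ n *
        Real.sin (((n + 1 : ℕ) : ℝ) * θ₁ - (n : ℝ) * θ₂ - α₂)
      = r₁ * (Complex.exp (Complex.I * ((θ₁ : ℂ) - α₂)) *
          (1 + ((r₁ * r₂ : ℝ) : ℂ) * Complex.exp (Complex.I * ((θ₁ : ℂ) - θ₂))) /
          (1 - ((r₁ * r₂ : ℝ) : ℂ) * Complex.exp (Complex.I * ((θ₁ : ℂ) - θ₂))) ^ 3).im := by
  set z : ℂ := ((r₁ * r₂ : ℝ) : ℂ) * Complex.exp (Complex.I * ((θ₁ : ℂ) - θ₂)) with hzdef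
  have hnorm : ‖z‖ < 1 := by
    rw [hzdef, norm_mul, Complex.norm_exp]
    have h0 : (Complex.I * ((θ₁ : ℂ) - θ₂)).re = 0 := by simp
    rw [h0, Real.exp_zero, mul_one, Complex.norm_real, Real.norm_eq_abs,
      _root_.abs_of_nonneg (mul_nonneg h₁ h₂)]
    calc r₁ * r₂ ≤ r₁ * 1 := by nlinarith
      _ < 1 := by linarith
  have H := (hasSum_sq_geom hnorm).mul_left
    (((r₁ : ℂ)) * Complex.exp (Complex.I * ((θ₁ : ℂ) - α₂)))
  have Hterm : ∀ n : ℕ,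
      (((r₁ : ℂ)) * Complex.exp (Complex.I * ((θ₁ : ℂ) - α₂)) *
        (((n + 1 : ℕ) : ℂ) ^ 2 * z ^ n))
      = ((((n + 1 : ℕ) : ℝ) ^ 2 * r₁ ^ (n + 1) * r₂ ^ n : ℝ) : ℂ) *
          Complex.exp ((((((n + 1 : ℕ) : ℝ) * θ₁ - (n : ℝ) * θ₂ - α₂ : ℝ)) : ℂ) * Complex.I) := by
    intro n
    have e1 : Complex.exp (Complex.I * ((θ₁ : ℂ) - α₂)) *
        Complex.exp ((n : ℂ) * (Complex.I * ((θ₁ : ℂ) - θ₂)))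
        = Complex.exp ((((((n + 1 : ℕ) : ℝ) * θ₁ - (n : ℝ) * θ₂ - α₂ : ℝ)) : ℂ) * Complex.I) := by
      rw [← Complex.exp_add]
      congr 1
      push_cast
      ring
    calc ((r₁ : ℂ)) * Complex.exp (Complex.I * ((θ₁ : ℂ) - α₂)) * (((n + 1 : ℕ) : ℂ) ^ 2 * z ^ n)
        = ((r₁ : ℂ) * ((r₁ * r₂ : ℝ) : ℂ) ^ n * ((n + 1 : ℕ) : ℂ) ^ 2) *
          (Complex.exp (Complex.I * ((θ₁ : ℂ) - α₂)) *
            Complex.exp ((n : ℂ) * (Complex.I * ((θ₁ : ℂ) - θ₂)))) := by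
          rw [hzdef, mul_pow, ← Complex.exp_nat_mul]; ring
      _ = _ := by rw [e1]; push_cast; ring
  have Him : HasSum
      (fun n : ℕ => ((n + 1 : ℕ) : ℝ) ^ 2 * r₁ ^ (n + 1) * r₂ ^ n *
        Real.sin (((n + 1 : ℕ) : ℝ) * θ₁ - (n : ℝ) * θ₂ - α₂))
      ((((r₁ : ℂ)) * Complex.exp (Complex.I * ((θ₁ : ℂ) - α₂)) * ((1 + z) / (1 - z) ^ 3)).im) := by
    have h := ((Complex.hasSum_iff _ _).1 H).2
    convert h using 2 with n
    rw [Hterm n]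
    simp only [Complex.mul_im, Complex.ofReal_re, Complex.ofReal_im,
      Complex.exp_ofReal_mul_I_im, Complex.exp_ofReal_mul_I_re, zero_mul, add_zero]
    try push_cast
    try ring
  rw [Him.tsum_eq]
  rw [show ((r₁:ℂ)) * Complex.exp (Complex.I * ((θ₁:ℂ) - α₂)) * ((1 + z) / (1 - z) ^ 3)
      = ((r₁:ℂ)) * (Complex.exp (Complex.I * ((θ₁:ℂ) - α₂)) * (1 + z) / (1 - z) ^ 3) from by ring]
  simp [Complex.mul_im]
end

section
/- Let k > 0, m ≥ 1 an integer, R > 0, and k_s > 0 with k_s ≠ k. Then |k_s I_m(k_s R) I_{m+1}(k R) - k I_{m+1}(k_s R) I_m(k R)| ≤ (R/m) · k k_s I_m(k R) I_m(k_s R), where I_m denotes the modified Bessel function of the first kind of order m. -/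
set_option maxHeartbeats 1000000


/-- The modified Bessel function of the first kind of nonnegative integer order. -/
noncomputable def besselI (m : ℕ) (x : ℝ) : ℝ :=
  ∑' j : ℕ, (x / 2) ^ (2 * j + m) /
    ((Nat.factorial j : ℝ) * (Nat.factorial (j + m) : ℝ))

lemma besselI_summable (m : ℕ) (x : ℝ) (hx : 0 ≤ x) :
    Summable (fun j : ℕ => (x / 2) ^ (2 * j + m) /
      ((Nat.factorial j : ℝ) * (Nat.factorial (j + m) : ℝ))) := by
  apply Summable.of_nonneg_of_le (f := fun j : ℕ => (x/2)^m * (((x/2)^2)^j / (Nat.factorial j : ℝ)))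
  · intro j; positivity
  · intro j
    have h1 : (x/2)^(2*j+m) = (x/2)^m * ((x/2)^2)^j := by
      rw [← pow_mul, ← pow_add]; ring_nf
    rw [h1, mul_div_assoc]
    have hfm : (1:ℝ) ≤ (Nat.factorial (j+m) : ℝ) := by
      exact_mod_cast Nat.one_le_iff_ne_zero.mpr (Nat.factorial_ne_zero _)
    have hj : (0:ℝ) < (Nat.factorial j : ℝ) := by positivity
    gcongr
    all_goals first | positivity | nlinarith [hj, hfm]
  · exact (Real.summable_pow_div_factorial ((x/2)^2)).mul_left _

lemma besselI_nonneg (m : ℕ) (x : ℝ) (hx : 0 ≤ x) : 0 ≤ besselI m x := by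
  apply tsum_nonneg
  intro j
  positivity

lemma besselI_succ_le (m : ℕ) (x : ℝ) (hx : 0 ≤ x) :
    besselI (m + 1) x ≤ x / (2 * (m + 1)) * besselI m x := by
  unfold besselI
  rw [← tsum_mul_left]
  apply Summable.tsum_le_tsum _ (besselI_summable (m+1) x hx)
      ((besselI_summable m x hx).mul_left _)
  intro j
  have hfre : (Nat.factorial (j + (m+1)) : ℝ)
      = ((j + m + 1 : ℕ) : ℝ) * (Nat.factorial (j + m) : ℝ) := by
    have : j + (m+1) = (j + m) + 1 := by ring
    rw [this, Nat.factorial_succ]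
    push_cast
    ring
  have hp : (x/2)^(2*j+(m+1)) = x / 2 * (x/2)^(2*j+m) := by
    rw [← pow_succ']
    ring_nf
  rw [hfre, hp]
  set a : ℝ := (Nat.factorial j : ℝ) with ha
  set b : ℝ := (Nat.factorial (j + m) : ℝ) with hb
  set c : ℝ := ((j + m + 1 : ℕ) : ℝ) with hc
  set p : ℝ := (x/2)^(2*j+m) with hpdef
  have hj : (0:ℝ) < a := by rw [ha]; positivity
  have hjm : (0:ℝ) < b := by rw [hb]; positivity
  have hcpos : (0:ℝ) < c := by rw [hc]; positivity
  have hmle : ((m:ℝ) + 1) ≤ c := by rw [hc]; push_cast; linarith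
  have hxp : 0 ≤ p := by rw [hpdef]; positivity
  have e1 : x / 2 * p / (a * (c * b)) = (x * p) / (2 * (a * (c * b))) := by
    field_simp
  have e2 : x / (2 * ((m:ℝ) + 1)) * (p / (a * b)) = (x * p) / ((2 * ((m:ℝ)+1)) * (a * b)) := by
    field_simp
  rw [e1, e2]
  rw [div_le_div_iff₀ (by positivity) (by positivity)]
  have hq : 0 ≤ x * p := mul_nonneg hx hxp
  nlinarith [mul_nonneg (mul_nonneg (mul_nonneg hq hj.le) hjm.le) (sub_nonneg.mpr hmle)]

theorem stmt14 (k ks R : ℝ) (m : ℕ) (hk : 0 < k) (hks : 0 < ks) (hR : 0 < R)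
    (hm : 1 ≤ m) (hne : ks ≠ k) :
    |ks * besselI m (ks * R) * besselI (m + 1) (k * R)
        - k * besselI (m + 1) (ks * R) * besselI m (k * R)|
      ≤ (R / m) * (k * ks * besselI m (k * R) * besselI m (ks * R)) := by
  have hkR : (0:ℝ) ≤ k * R := by positivity
  have hksR : (0:ℝ) ≤ ks * R := by positivity
  have hIk := besselI_nonneg m (k*R) hkR
  have hIks := besselI_nonneg m (ks*R) hksR
  have hIk1 := besselI_nonneg (m+1) (k*R) hkR
  have hIks1 := besselI_nonneg (m+1) (ks*R) hksR
  have h1 := besselI_succ_le m (k*R) hkR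
  have h2 := besselI_succ_le m (ks*R) hksR
  have hm1 : (1:ℝ) ≤ (m:ℝ) := by exact_mod_cast hm
  have hmpos : (0:ℝ) < (m:ℝ) := by linarith
  set C := (R / m) * (k * ks * besselI m (k * R) * besselI m (ks * R)) with hC
  have hfrac : k * R / (2 * (m + 1)) ≤ R / m * k := by
    rw [div_le_iff₀ (by positivity)]
    have : R / m * k * (2 * (m + 1)) = k * R * (2 * ((m:ℝ)+1) / m) := by
      field_simp
    rw [this]
    have hr : (1:ℝ) ≤ 2 * ((m:ℝ)+1) / m := by
      rw [le_div_iff₀ hmpos]; linarith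
    nlinarith [mul_pos hk hR, hr]
  have ha : ks * besselI m (ks * R) * besselI (m + 1) (k * R) ≤ C := by
    calc ks * besselI m (ks * R) * besselI (m + 1) (k * R)
        ≤ ks * besselI m (ks * R) * (k * R / (2 * (m + 1)) * besselI m (k * R)) := by
          gcongr
        _ ≤ ks * besselI m (ks * R) * (R / m * k * besselI m (k * R)) := by
          gcongr
        _ = C := by rw [hC]; ring
  have hfrac2 : ks * R / (2 * (m + 1)) ≤ R / m * ks := by
    rw [div_le_iff₀ (by positivity)]
    have : R / m * ks * (2 * (m + 1)) = ks * R * (2 * ((m:ℝ)+1) / m) := by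
      field_simp
    rw [this]
    have hr : (1:ℝ) ≤ 2 * ((m:ℝ)+1) / m := by
      rw [le_div_iff₀ hmpos]; linarith
    nlinarith [mul_pos hks hR, hr]
  have hb : k * besselI (m + 1) (ks * R) * besselI m (k * R) ≤ C := by
    calc k * besselI (m + 1) (ks * R) * besselI m (k * R)
        ≤ k * (ks * R / (2 * (m + 1)) * besselI m (ks * R)) * besselI m (k * R) := by
          gcongr
        _ ≤ k * (R / m * ks * besselI m (ks * R)) * besselI m (k * R) := by
          gcongr
        _ = C := by rw [hC]; ring
  have hapos : 0 ≤ ks * besselI m (ks * R) * besselI (m + 1) (k * R) := by positivity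
  have hbpos : 0 ≤ k * besselI (m + 1) (ks * R) * besselI m (k * R) := by positivity
  rw [abs_le]
  constructor <;> nlinarith
end
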